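/- For every integer n ≥ 1 and every real number x, one has x^n = Σ_{k=0}^{n} S_D(n,k) · [x]_k^D + n · ((x−1)^{n−1} − ∏_{j=1}^{n−1} (x − (2j−1))), where [x]_0^D = 1, [x]_k^D = ∏_{j=1}^{k} (x − (2j−1)) for 1 ≤ k < n, and [x]_n^D = (x − (n−1)) · ∏_{j=1}^{n−1} (x − (2j−1)). -/

import Mathlib

open Classical Finset

/-! ### Signed permutations (type B), window notation -/

/-- `w` is the window notation of a signed permutation of `{1,…,n}`. -/
def IsSignedPerm {n : ℕ} (w : Fin n → ℤ) : Prop :=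
  (∀ i, 1 ≤ |w i| ∧ |w i| ≤ (n : ℤ)) ∧ Function.Injective fun i => |w i|

/-- The value `β(i)` for `1 ≤ i ≤ n`, and `0` otherwise (so `β(0) = 0`). -/
def bVal {n : ℕ} (w : Fin n → ℤ) (i : ℕ) : ℤ :=
  if h : 1 ≤ i ∧ i ≤ n then w ⟨i - 1, by omega⟩ else 0

/-- Type `B` descent number: `#{i ∈ {0,…,n−1} : β(i) > β(i+1)}`, with `β(0) = 0`. -/
noncomputable def desB {n : ℕ} (w : Fin n → ℤ) : ℕ :=
  ((Finset.range n).filter fun i => bVal w (i + 1) < bVal w i).card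

/-- Type `B` Eulerian number `A_B(n,k)`. -/
noncomputable def EulB (n k : ℕ) : ℕ :=
  Nat.card { w : Fin n → ℤ // IsSignedPerm w ∧ desB w = k }

/-- Type `D` descent number: as in type `B` but with the convention `γ(0) = −γ(2)`. -/
noncomputable def desD {n : ℕ} (w : Fin n → ℤ) : ℕ :=
  ((Finset.range n).filter fun i =>
    bVal w (i + 1) < (if i = 0 then -(bVal w 2) else bVal w i)).card

/-- `w` has an even number of negative entries. -/
def IsEvenSigned {n : ℕ} (w : Fin n → ℤ) : Prop :=
  Even ((Finset.univ.filter fun i => w i < 0)).card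

/-- Type `D` Eulerian number `A_D(n,k)`. -/
noncomputable def EulD (n k : ℕ) : ℕ :=
  Nat.card { w : Fin n → ℤ // IsSignedPerm w ∧ IsEvenSigned w ∧ desD w = k }

/-! ### Set partitions of types B and D -/

/-- The negative `−C` of a block `C`. -/
def negSet (C : Finset ℤ) : Finset ℤ := C.image fun x => -x

/-- A `Bₙ`-partition: a set partition of `{−n,…,−1,1,…,n}` such that at most one block
satisfies `C = −C` (the zero-block), and `−C` is a block whenever `C` is. -/
structure BPartition (n : ℕ) where
  blocks : Finset (Finset ℤ)
  cover : ∀ x : ℤ, (x ≠ 0 ∧ |x| ≤ (n : ℤ)) ↔ ∃ C ∈ blocks, x ∈ C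
  nonempty : ∀ C ∈ blocks, C.Nonempty
  disj : ∀ C ∈ blocks, ∀ C' ∈ blocks, C ≠ C' → Disjoint C C'
  closed : ∀ C ∈ blocks, negSet C ∈ blocks
  zeroUnique : ∀ C ∈ blocks, ∀ C' ∈ blocks, negSet C = C → negSet C' = C' → C = C'

/-- A `Dₙ`-partition: a `Bₙ`-partition whose zero-block, if present, has at least
two positive elements. -/
def IsDPartition {n : ℕ} (P : BPartition n) : Prop :=
  ∀ C ∈ P.blocks, negSet C = C → 2 ≤ (C.filter fun x => 0 < x).card

/-- `P` has exactly `r` pairs `{C, −C}` of nonzero blocks. -/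
def hasPairs {n : ℕ} (P : BPartition n) (r : ℕ) : Prop :=
  (P.blocks.filter fun C => negSet C ≠ C).card = 2 * r

/-- Stirling number of the second kind of type `B`. -/
noncomputable def SB (n r : ℕ) : ℕ :=
  Nat.card { P : BPartition n // hasPairs P r }

/-- Stirling number of the second kind of type `D`. -/
noncomputable def SD (n r : ℕ) : ℕ :=
  Nat.card { P : BPartition n // IsDPartition P ∧ hasPairs P r }

/-- An ordered `Bₙ`-partition: a `Bₙ`-partition with a linear order on its blocks in
which the zero-block (if present) comes first and `C, −C` are always adjacent. -/
structure OrderedBPartition (n : ℕ) where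
  P : BPartition n
  order : List (Finset ℤ)
  nodup : order.Nodup
  same : order.toFinset = P.blocks
  zeroFirst : ∀ C ∈ P.blocks, negSet C = C → order[0]? = some C
  adjacent : ∀ C ∈ P.blocks, negSet C ≠ C →
    ∃ i : ℕ, (order[i]? = some C ∧ order[i+1]? = some (negSet C)) ∨
             (order[i]? = some (negSet C) ∧ order[i+1]? = some C)

/-! ### Classical Stirling and Eulerian numbers -/

/-- The classical Stirling number of the second kind `S(n,r)`. -/
noncomputable def Stir (n r : ℕ) : ℕ :=
  Nat.card { P : Finpartition (Finset.univ : Finset (Fin n)) // P.parts.card = r }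

/-- Number of descents of a permutation of `{1,…,n}`. -/
noncomputable def desA {n : ℕ} (σ : Equiv.Perm (Fin n)) : ℕ :=
  ((Finset.range (n - 1)).filter fun i =>
    ∃ h : i + 1 < n, σ ⟨i + 1, h⟩ < σ ⟨i, Nat.lt_of_succ_lt h⟩).card

/-- The classical Eulerian number `A(n,k)`: permutations with `k−1` descents
(and `A(n,0) = 0`). -/
noncomputable def EulA (n k : ℕ) : ℕ :=
  if k = 0 then 0 else Nat.card { σ : Equiv.Perm (Fin n) // desA σ = k - 1 }

/-! ### Colored permutations -/

/-- `π` is (the window notation of) a colored permutation in `G_{m,n}`. -/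
def IsColoredPerm {m n : ℕ} (π : Fin n → Fin n × ZMod m) : Prop :=
  Function.Bijective fun i => (π i).1

/-- The color order `a ≺ b` on the colored alphabet. -/
def colorLt {m n : ℕ} (a b : Fin n × ZMod m) : Prop :=
  b.2.val < a.2.val ∨ (a.2 = b.2 ∧ a.1 < b.1)

/-- The descent number `des_G` of a colored permutation. -/
noncomputable def desG {m n : ℕ} (π : Fin n → Fin n × ZMod m) : ℕ :=
  ((Finset.range (n - 1)).filter fun i =>
    ∃ h : i + 1 < n, colorLt (π ⟨i + 1, h⟩) (π ⟨i, Nat.lt_of_succ_lt h⟩)).card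
  + (if h : 0 < n then (if (π ⟨0, h⟩).2 ≠ 0 then 1 else 0) else 0)

/-- The Eulerian number `A_m(n,k)` of `G_{m,n}`. -/
noncomputable def EulG (m n k : ℕ) : ℕ :=
  Nat.card { π : Fin n → Fin n × ZMod m // IsColoredPerm π ∧ desG π = k }

/-- The shift `C^{[t]}` of a block of the colored alphabet. -/
def shiftBlock {m n : ℕ} (t : ZMod m) (C : Finset (Fin n × ZMod m)) :
    Finset (Fin n × ZMod m) :=
  C.image fun p => (p.1, p.2 + t)

/-- A `G_{m,n}`-partition. -/
structure GPartition (m n : ℕ) where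
  blocks : Finset (Finset (Fin n × ZMod m))
  cover : ∀ x : Fin n × ZMod m, ∃ C ∈ blocks, x ∈ C
  nonempty : ∀ C ∈ blocks, C.Nonempty
  disj : ∀ C ∈ blocks, ∀ C' ∈ blocks, C ≠ C' → Disjoint C C'
  closed : ∀ C ∈ blocks, shiftBlock 1 C ∈ blocks
  zeroUnique : ∀ C ∈ blocks, ∀ C' ∈ blocks,
    shiftBlock 1 C = C → shiftBlock 1 C' = C' → C = C'

/-- The number of equivalence classes (orbits under shifting) of nonzero blocks. -/
noncomputable def numClasses {m n : ℕ} (P : GPartition m n) : ℕ :=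
  ((P.blocks.filter fun C => shiftBlock 1 C ≠ C).image
    fun C => (Finset.range m).image fun t => shiftBlock (t : ZMod m) C).card

/-- Stirling number of the second kind `S_m(n,r)` for `G_{m,n}`. -/
noncomputable def SG (m n r : ℕ) : ℕ :=
  Nat.card { P : GPartition m n // numClasses P = r }

/-- An ordered `G_{m,n}`-partition. -/
structure OrderedGPartition (m n : ℕ) where
  P : GPartition m n
  order : List (Finset (Fin n × ZMod m))
  nodup : order.Nodup
  same : order.toFinset = P.blocks
  zeroFirst : ∀ C ∈ P.blocks, shiftBlock 1 C = C → order[0]? = some C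
  consec : ∀ C ∈ P.blocks, shiftBlock 1 C ≠ C →
    ∃ i : ℕ, ∃ s : ZMod m, ∀ t : ℕ, t < m →
      order[i + t]? = some (shiftBlock (s + (t : ZMod m)) C)

/-!
Put `x = 2m + 1`. Each `f : [n] → [-m, m]`, extended oddly to `±[n]`, has level sets forming a
`Bₙ`-partition, and the functions over a fixed partition with `k` pairs of nonzero blocks are its
odd injective labellings, `2ᵏ m(m-1)⋯(m-k+1) = (x-1)(x-3)⋯(x-2k+1)` of them. The partition is a
`Dₙ`-partition unless `f` has exactly one zero, which happens for `n (2m)ⁿ⁻¹ = n (x-1)ⁿ⁻¹`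
functions. Hence `xⁿ = ∑ₖ S_D(n,k) (x-1)⋯(x-2k+1) + n (x-1)ⁿ⁻¹` at infinitely many points, so identically.
Comparing coefficients of `xⁿ` gives `S_D(n,n) = 1`, and
`[x]ₙᴰ = (x-1)⋯(x-2n+1) + n (x-1)⋯(x-2n+3)` turns the identity into the stated one.
-/

noncomputable def signedRange (n : ℕ) : Finset ℤ := (Icc (-(n : ℤ)) n).erase 0

section SignedRange

variable {n : ℕ} {x : ℤ}

lemma mem_signedRange : x ∈ signedRange n ↔ x ≠ 0 ∧ |x| ≤ n := by
  rw [signedRange, mem_erase, mem_Icc, abs_le]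

lemma neg_mem_signedRange : -x ∈ signedRange n ↔ x ∈ signedRange n := by
  simp [mem_signedRange]

lemma card_signedRange (n : ℕ) : #(signedRange n) = 2 * n := by
  rw [signedRange, card_erase_of_mem (by simp), Int.card_Icc]
  omega

lemma natCast_succ_mem_signedRange (i : Fin n) : ((i : ℤ) + 1) ∈ signedRange n := by
  have := i.isLt
  rw [mem_signedRange, abs_of_nonneg (by positivity)]
  omega

lemma exists_eq_of_mem_signedRange (hx : x ∈ signedRange n) :
    ∃ i : Fin n, x = i + 1 ∨ x = -(i + 1) := by
  rw [mem_signedRange, abs_le] at hx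
  refine ⟨⟨x.natAbs - 1, by omega⟩, ?_⟩
  push_cast
  omega

lemma abs_mem_Icc_iff_mem_signedRange : |x| ∈ Icc 1 (n : ℤ) ↔ x ∈ signedRange n := by
  rw [mem_Icc, mem_signedRange]
  exact and_congr_left' ⟨fun h h0 => by simp [h0] at h, Int.one_le_abs⟩

end SignedRange

lemma mem_negSet {C : Finset ℤ} {x : ℤ} : x ∈ negSet C ↔ -x ∈ C := by
  simp only [negSet, mem_image]
  exact ⟨by rintro ⟨y, hy, rfl⟩; simpa, fun h => ⟨-x, h, neg_neg x⟩⟩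

@[simp]
lemma negSet_negSet (C : Finset ℤ) : negSet (negSet C) = C := by
  ext x
  rw [mem_negSet, mem_negSet, neg_neg]

section OddExtension

variable {n : ℕ} (f : Fin n → ℤ)

/-- `f i` sits at `i + 1`; the extension is odd and vanishes outside `±[1, n]`. -/
def oddExt (x : ℤ) : ℤ :=
  if h : x.natAbs - 1 < n then x.sign * f ⟨x.natAbs - 1, h⟩ else 0

lemma oddExt_neg (x : ℤ) : oddExt f (-x) = -oddExt f x := by
  simp only [oddExt, Int.natAbs_neg, Int.sign_neg]
  split_ifs <;> ring

lemma oddExt_natCast_succ (i : Fin n) : oddExt f (i + 1) = f i := by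
  have h : ((i : ℤ) + 1).natAbs - 1 = i := by omega
  simp [oddExt, h, Int.sign_eq_one_of_pos (by positivity : (0 : ℤ) < i + 1)]

lemma abs_oddExt_le {m : ℕ} (hf : ∀ i, |f i| ≤ m) (x : ℤ) : |oddExt f x| ≤ m := by
  unfold oddExt
  split_ifs
  · rw [abs_mul]
    rcases eq_or_ne x 0 with rfl | hx
    · simp
    · rw [Int.abs_sign_of_ne_zero hx, one_mul]
      exact hf _
  · simp

lemma exists_eq_zero_of_oddExt_eq_zero {x : ℤ} (hx : x ∈ signedRange n) (h : oddExt f x = 0) :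
    ∃ i, f i = 0 := by
  obtain ⟨i, rfl | rfl⟩ := exists_eq_of_mem_signedRange hx
  · exact ⟨i, by rwa [oddExt_natCast_succ] at h⟩
  · exact ⟨i, by rwa [oddExt_neg, neg_eq_zero, oddExt_natCast_succ] at h⟩

end OddExtension

noncomputable def boundedFuns (n m : ℕ) : Finset (Fin n → ℤ) :=
  Fintype.piFinset fun _ => Icc (-(m : ℤ)) m

lemma mem_boundedFuns {n m : ℕ} {f : Fin n → ℤ} : f ∈ boundedFuns n m ↔ ∀ i, |f i| ≤ m := by
  simp [boundedFuns, abs_le]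

def IsSignedEmbedding {ι : Type*} (m : ℕ) (e : ι → ℤ) : Prop :=
  (∀ i, e i ∈ signedRange m) ∧ Function.Injective fun i => |e i|

def signedEmbeddingEquiv (ι : Type*) (m : ℕ) :
    {e : ι → ℤ // IsSignedEmbedding m e} ≃ (ι ↪ Icc (1 : ℤ) m) × (ι → Bool) where
  toFun e := (⟨fun i => ⟨|e.1 i|, abs_mem_Icc_iff_mem_signedRange.2 (e.2.1 i)⟩,
    fun _ _ h => e.2.2 (congrArg Subtype.val h)⟩, fun i => decide (0 < e.1 i))
  invFun us := ⟨fun i => if us.2 i then (us.1 i : ℤ) else -(us.1 i : ℤ), by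
    have habs (i) : |if us.2 i then (us.1 i : ℤ) else -(us.1 i : ℤ)| = us.1 i := by
      have := (mem_Icc.1 (us.1 i).2).1
      split_ifs <;> simp [abs_of_pos (by omega : (0 : ℤ) < us.1 i)]
    refine ⟨fun i => abs_mem_Icc_iff_mem_signedRange.1 (habs i ▸ (us.1 i).2), fun i j h => ?_⟩
    simp only [habs] at h
    exact us.1.injective (Subtype.ext h)⟩
  left_inv e := by
    refine Subtype.ext (funext fun i => ?_)
    show (if decide (0 < e.1 i) then |e.1 i| else -|e.1 i|) = e.1 i
    have := (mem_signedRange.1 (e.2.1 i)).1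
    by_cases h : 0 < e.1 i
    · simp [h, abs_of_pos h]
    · simp [h, abs_of_neg (by omega : e.1 i < 0)]
  right_inv us := by
    obtain ⟨u, s⟩ := us
    have hu (i) : (0 : ℤ) < u i := by have := (mem_Icc.1 (u i).2).1; omega
    refine Prod.ext (Function.Embedding.ext fun i => Subtype.ext ?_) (funext fun i => ?_) <;>
      cases h : s i <;> simp [h, hu i, (hu i).le, abs_of_pos (hu i)]

lemma card_isSignedEmbedding (ι : Type*) [Fintype ι] (m : ℕ) :
    Nat.card {e : ι → ℤ // IsSignedEmbedding m e} =
      2 ^ Fintype.card ι * m.descFactorial (Fintype.card ι) := by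
  rw [Nat.card_congr (signedEmbeddingEquiv ι m), Nat.card_prod, Nat.card_eq_fintype_card,
    Nat.card_eq_fintype_card, Fintype.card_embedding_eq, Fintype.card_fun, Fintype.card_bool,
    Fintype.card_coe, Int.card_Icc]
  simp [mul_comm]

section KerPartition

variable {n : ℕ} (f : Fin n → ℤ)

noncomputable def levelSet (c : ℤ) : Finset ℤ := (signedRange n).filter (oddExt f · = c)

variable {f}

lemma mem_levelSet {c x : ℤ} : x ∈ levelSet f c ↔ x ∈ signedRange n ∧ oddExt f x = c :=
  mem_filter

lemma negSet_levelSet (c : ℤ) : negSet (levelSet f c) = levelSet f (-c) := by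
  ext x
  rw [mem_negSet, mem_levelSet, mem_levelSet, neg_mem_signedRange, oddExt_neg, neg_eq_iff_eq_neg]

lemma eq_zero_of_negSet_levelSet_eq {c : ℤ} (hc : (levelSet f c).Nonempty)
    (h : negSet (levelSet f c) = levelSet f c) : c = 0 := by
  obtain ⟨x, hx⟩ := hc
  have hx' : x ∈ negSet (levelSet f c) := h.symm ▸ hx
  rw [negSet_levelSet, mem_levelSet] at hx'
  have := (mem_levelSet.1 hx).2
  omega

variable (f)

noncomputable def kerPartition : BPartition n where
  blocks := (signedRange n).image fun x => levelSet f (oddExt f x)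
  cover x := by
    simp only [← mem_signedRange, mem_image, exists_exists_and_eq_and, mem_levelSet]
    exact ⟨fun hx => ⟨x, hx, hx, rfl⟩, fun ⟨_, _, hx, _⟩ => hx⟩
  nonempty := by
    simp only [mem_image]
    rintro _ ⟨x, hx, rfl⟩
    exact ⟨x, mem_levelSet.2 ⟨hx, rfl⟩⟩
  disj := by
    simp only [mem_image]
    rintro _ ⟨x, -, rfl⟩ _ ⟨y, -, rfl⟩ hne
    refine disjoint_left.2 fun z hzx hzy => hne ?_
    rw [← (mem_levelSet.1 hzx).2, (mem_levelSet.1 hzy).2]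
  closed := by
    simp only [mem_image]
    rintro _ ⟨x, hx, rfl⟩
    exact ⟨-x, neg_mem_signedRange.2 hx, by rw [negSet_levelSet, oddExt_neg]⟩
  zeroUnique := by
    simp only [mem_image]
    rintro _ ⟨x, hx, rfl⟩ _ ⟨y, hy, rfl⟩ hxx hyy
    rw [eq_zero_of_negSet_levelSet_eq ⟨x, mem_levelSet.2 ⟨hx, rfl⟩⟩ hxx,
      eq_zero_of_negSet_levelSet_eq ⟨y, mem_levelSet.2 ⟨hy, rfl⟩⟩ hyy]

def zeros : Finset (Fin n) := univ.filter (f · = 0)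

lemma card_pos_levelSet_zero : #((levelSet f 0).filter (0 < ·)) = #(zeros f) := by
  have : (levelSet f 0).filter (0 < ·) = (zeros f).image fun i : Fin n => (i : ℤ) + 1 := by
    ext x
    simp only [mem_filter, mem_levelSet, mem_image, zeros, mem_univ, true_and]
    constructor
    · rintro ⟨⟨hx, hx0⟩, hpos⟩
      obtain ⟨i, rfl | rfl⟩ := exists_eq_of_mem_signedRange hx
      · exact ⟨i, by rwa [oddExt_natCast_succ] at hx0, rfl⟩
      · omega
    · rintro ⟨i, hi, rfl⟩
      exact ⟨⟨natCast_succ_mem_signedRange i, by rw [oddExt_natCast_succ, hi]⟩, by omega⟩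
  rw [this, card_image_of_injective _ fun i j h => Fin.ext (by simpa using h)]

theorem isDPartition_kerPartition_iff : IsDPartition (kerPartition f) ↔ #(zeros f) ≠ 1 := by
  constructor
  · intro hD h1
    obtain ⟨i, hi⟩ := card_eq_one.1 h1
    have hfi : f i = 0 := (mem_filter.1 (hi ▸ mem_singleton_self i : i ∈ zeros f)).2
    have hmem : levelSet f 0 ∈ (kerPartition f).blocks :=
      mem_image.2 ⟨_, natCast_succ_mem_signedRange i, by rw [oddExt_natCast_succ, hfi]⟩
    have := hD _ hmem (by rw [negSet_levelSet, neg_zero])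
    rw [card_pos_levelSet_zero] at this
    omega
  · intro h1 C hC hCC
    obtain ⟨x, hx, rfl⟩ := mem_image.1 hC
    have hx0 := eq_zero_of_negSet_levelSet_eq ⟨x, mem_levelSet.2 ⟨hx, rfl⟩⟩ hCC
    obtain ⟨i, hi⟩ := exists_eq_zero_of_oddExt_eq_zero f hx hx0
    have : 0 < #(zeros f) := card_pos.2 ⟨i, mem_filter.2 ⟨mem_univ i, hi⟩⟩
    rw [hx0, card_pos_levelSet_zero]
    omega

end KerPartition

namespace BPartition

variable {n : ℕ} (P : BPartition n) {C C' : Finset ℤ} {x : ℤ}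

lemma ext_blocks {P Q : BPartition n} (h : P.blocks = Q.blocks) : P = Q := by
  cases P
  cases Q
  congr

lemma subset_signedRange (hC : C ∈ P.blocks) : C ⊆ signedRange n :=
  fun x hx => mem_signedRange.2 ((P.cover x).2 ⟨C, hC, hx⟩)

lemma eq_of_mem_of_mem (hC : C ∈ P.blocks) (hC' : C' ∈ P.blocks) (hx : x ∈ C) (hx' : x ∈ C') :
    C = C' :=
  by_contra fun hne => disjoint_left.1 (P.disj C hC C' hC' hne) hx hx'

instance : Finite (BPartition n) :=
  Finite.of_injective
    (fun P => (⟨P.blocks, mem_powerset.2 fun _ hC => mem_powerset.2 (P.subset_signedRange hC)⟩ :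
      (signedRange n).powerset.powerset))
    fun _ _ h => ext_blocks (congrArg Subtype.val h)

noncomputable instance : Fintype (BPartition n) := Fintype.ofFinite _

lemma card_blocks_le : #P.blocks ≤ 2 * n := by
  rw [← card_signedRange n]
  refine (card_le_card_biUnion (f := id) (fun _ hC _ hC' => P.disj _ hC _ hC') P.nonempty).trans
    (card_le_card (biUnion_subset.2 fun C hC => P.subset_signedRange hC))

noncomputable def blockOf (x : ℤ) : Finset ℤ :=
  if h : ∃ C ∈ P.blocks, x ∈ C then h.choose else ∅

lemma blockOf_mem_and_mem (hx : x ∈ signedRange n) : P.blockOf x ∈ P.blocks ∧ x ∈ P.blockOf x := by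
  have h : ∃ C ∈ P.blocks, x ∈ C := (P.cover x).1 (mem_signedRange.1 hx)
  rw [blockOf, dif_pos h]
  exact h.choose_spec

lemma blockOf_mem (hx : x ∈ signedRange n) : P.blockOf x ∈ P.blocks :=
  (P.blockOf_mem_and_mem hx).1

lemma mem_blockOf (hx : x ∈ signedRange n) : x ∈ P.blockOf x :=
  (P.blockOf_mem_and_mem hx).2

lemma blockOf_eq (hC : C ∈ P.blocks) (hx : x ∈ C) : P.blockOf x = C :=
  have hx' := P.subset_signedRange hC hx
  P.eq_of_mem_of_mem (P.blockOf_mem hx') hC (P.mem_blockOf hx') hx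

lemma blockOf_neg (hx : x ∈ signedRange n) : P.blockOf (-x) = negSet (P.blockOf x) :=
  P.blockOf_eq (P.closed _ (P.blockOf_mem hx)) (by rw [mem_negSet, neg_neg]; exact P.mem_blockOf hx)

/-- One block out of each pair `{C, -C}` of nonzero blocks; the zero block fails the strict
inequality. -/
def posBlocks : Finset (Finset ℤ) := P.blocks.filter fun C => C.min < (negSet C).min

variable {P}

lemma mem_blocks_of_mem_posBlocks (hC : C ∈ P.posBlocks) : C ∈ P.blocks :=
  (mem_filter.1 hC).1

lemma negSet_ne_of_mem_posBlocks (hC : C ∈ P.posBlocks) : negSet C ≠ C :=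
  fun h => (mem_filter.1 hC).2.ne (by rw [h])

lemma negSet_notMem_posBlocks (hC : C ∈ P.posBlocks) : negSet C ∉ P.posBlocks := fun h =>
  (mem_filter.1 hC).2.not_gt (by simpa using (mem_filter.1 h).2)

lemma mem_posBlocks_or_negSet_mem (hC : C ∈ P.blocks) (hCC : negSet C ≠ C) :
    C ∈ P.posBlocks ∨ negSet C ∈ P.posBlocks := by
  have hmin : C.min ≠ (negSet C).min := by
    obtain ⟨a, ha⟩ := min_of_nonempty (P.nonempty C hC)
    intro h
    exact hCC (P.eq_of_mem_of_mem (P.closed C hC) hC (mem_of_min (h ▸ ha)) (mem_of_min ha))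
  rcases hmin.lt_or_gt with h | h
  · exact Or.inl (mem_filter.2 ⟨hC, h⟩)
  · exact Or.inr (mem_filter.2 ⟨P.closed C hC, by rwa [negSet_negSet]⟩)

lemma filter_negSet_ne_eq :
    P.blocks.filter (fun C => negSet C ≠ C) = P.posBlocks ∪ P.posBlocks.image negSet := by
  ext C
  simp only [mem_filter, mem_union, mem_image]
  constructor
  · rintro ⟨hC, hCC⟩
    refine (mem_posBlocks_or_negSet_mem hC hCC).imp id fun h => ⟨_, h, negSet_negSet C⟩
  · rintro (hC | ⟨D, hD, rfl⟩)
    · exact ⟨mem_blocks_of_mem_posBlocks hC, negSet_ne_of_mem_posBlocks hC⟩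
    · refine ⟨P.closed D (mem_blocks_of_mem_posBlocks hD), ?_⟩
      rw [negSet_negSet]
      exact (negSet_ne_of_mem_posBlocks hD).symm

variable (P)

lemma hasPairs_iff (r : ℕ) : hasPairs P r ↔ #P.posBlocks = r := by
  have hdisj : Disjoint P.posBlocks (P.posBlocks.image negSet) :=
    disjoint_left.2 fun C hC h => by
      obtain ⟨D, hD, rfl⟩ := mem_image.1 h
      exact negSet_notMem_posBlocks hD hC
  rw [hasPairs, filter_negSet_ne_eq, card_union_of_disjoint hdisj,
    card_image_of_injective _ (Function.LeftInverse.injective negSet_negSet)]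
  omega

lemma card_posBlocks_le : #P.posBlocks ≤ n := by
  have h := card_le_card (filter_subset (fun C => negSet C ≠ C) P.blocks)
  have := (P.hasPairs_iff _).2 rfl
  rw [hasPairs] at this
  linarith [P.card_blocks_le]

variable {m : ℕ} {P}

lemma exists_posBlocks (hC : C ∈ P.blocks) (hCC : negSet C ≠ C) :
    ∃ X ∈ P.posBlocks, C = X ∨ C = negSet X :=
  (mem_posBlocks_or_negSet_mem hC hCC).elim (fun h => ⟨C, h, Or.inl rfl⟩)
    fun h => ⟨negSet C, h, Or.inr (negSet_negSet C).symm⟩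

variable (P) (e : P.posBlocks → ℤ)

def label (C : Finset ℤ) : ℤ :=
  (if h : C ∈ P.posBlocks then e ⟨C, h⟩ else 0) -
    if h : negSet C ∈ P.posBlocks then e ⟨negSet C, h⟩ else 0

variable {P e}

lemma label_negSet (C : Finset ℤ) : P.label e (negSet C) = -P.label e C := by
  rw [label, label, negSet_negSet]
  ring

lemma label_of_mem_posBlocks (h : C ∈ P.posBlocks) : P.label e C = e ⟨C, h⟩ := by
  rw [label, dif_pos h, dif_neg (negSet_notMem_posBlocks h), sub_zero]

lemma label_of_negSet_eq (h : negSet C = C) : P.label e C = 0 := by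
  have := label_negSet (P := P) (e := e) C
  rw [h] at this
  omega

lemma abs_label_eq {X : Finset ℤ} (hX : X ∈ P.posBlocks) (hC : C = X ∨ C = negSet X) :
    |P.label e C| = |e ⟨X, hX⟩| := by
  rcases hC with rfl | rfl
  · rw [label_of_mem_posBlocks hX]
  · rw [label_negSet, abs_neg, label_of_mem_posBlocks hX]

lemma abs_label_le (he : IsSignedEmbedding m e) (hC : C ∈ P.blocks) : |P.label e C| ≤ m := by
  by_cases hCC : negSet C = C
  · simp [label_of_negSet_eq hCC]
  obtain ⟨X, hX, hCX⟩ := exists_posBlocks hC hCC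
  rw [abs_label_eq hX hCX]
  exact (mem_signedRange.1 (he.1 _)).2

lemma label_eq_zero_iff (he : IsSignedEmbedding m e) (hC : C ∈ P.blocks) :
    P.label e C = 0 ↔ negSet C = C := by
  refine ⟨fun h0 => by_contra fun hCC => ?_, label_of_negSet_eq⟩
  obtain ⟨X, hX, hCX⟩ := exists_posBlocks hC hCC
  have := abs_label_eq (e := e) hX hCX
  rw [h0, abs_zero, eq_comm, abs_eq_zero] at this
  exact (mem_signedRange.1 (he.1 _)).1 this

lemma label_injOn (he : IsSignedEmbedding m e) : Set.InjOn (P.label e) P.blocks := by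
  intro C hC C' hC' h
  by_cases hCC : negSet C = C
  · refine P.zeroUnique C hC C' hC' hCC ((label_eq_zero_iff he hC').1 ?_)
    rw [← h, label_of_negSet_eq hCC]
  have hC'C' : negSet C' ≠ C' := fun h' =>
    hCC ((label_eq_zero_iff he hC).1 (h.trans (label_of_negSet_eq h')))
  obtain ⟨X, hX, hCX⟩ := exists_posBlocks hC hCC
  obtain ⟨X', hX', hCX'⟩ := exists_posBlocks hC' hC'C'
  have hXX' : |e ⟨X, hX⟩| = |e ⟨X', hX'⟩| := by
    rw [← abs_label_eq hX hCX, h, abs_label_eq hX' hCX']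
  obtain rfl : X = X' := congrArg Subtype.val (he.2 hXX')
  have hself : ¬ P.label e X = P.label e (negSet X) := fun h' => by
    rw [label_negSet] at h'
    have hX0 : P.label e X = 0 := by omega
    exact negSet_ne_of_mem_posBlocks hX
      ((label_eq_zero_iff he (mem_blocks_of_mem_posBlocks hX)).1 hX0)
  rcases hCX with rfl | rfl <;> rcases hCX' with rfl | rfl
  · rfl
  · exact absurd h hself
  · exact absurd h.symm hself
  · rfl

end BPartition

section Fiber

open BPartition

variable {n m : ℕ} {P : BPartition n} {f : Fin n → ℤ} {C : Finset ℤ} {x : ℤ}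

lemma eq_levelSet_of_kerPartition_eq (hf : kerPartition f = P) (hC : C ∈ P.blocks) (hx : x ∈ C) :
    C = levelSet f (oddExt f x) := by
  rw [← hf] at hC
  obtain ⟨y, -, rfl⟩ := mem_image.1 hC
  rw [(mem_levelSet.1 hx).2]

variable (P) (f)

def blockValues (X : P.posBlocks) : ℤ :=
  oddExt f (X.1.min' (P.nonempty X.1 (mem_blocks_of_mem_posBlocks X.2)))

variable {P f}

lemma blockValues_eq (hf : kerPartition f = P) (X : P.posBlocks) (hx : x ∈ X.1) :
    blockValues P f X = oddExt f x := by
  have hX := mem_blocks_of_mem_posBlocks X.2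
  have := (Finset.ext_iff.1 (eq_levelSet_of_kerPartition_eq hf hX hx) _).1
    (X.1.min'_mem (P.nonempty X.1 hX))
  exact (mem_levelSet.1 this).2

lemma label_blockValues (hf : kerPartition f = P) (hC : C ∈ P.blocks) (hx : x ∈ C) :
    P.label (blockValues P f) C = oddExt f x := by
  by_cases hCC : negSet C = C
  · rw [label_of_negSet_eq hCC, eq_comm]
    rw [eq_levelSet_of_kerPartition_eq hf hC hx] at hCC
    exact eq_zero_of_negSet_levelSet_eq ⟨x, mem_levelSet.2 ⟨P.subset_signedRange hC hx, rfl⟩⟩ hCC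
  rcases mem_posBlocks_or_negSet_mem hC hCC with h | h
  · rw [label_of_mem_posBlocks h, blockValues_eq hf ⟨C, h⟩ hx]
  · rw [← neg_neg (P.label _ C), ← label_negSet, label_of_mem_posBlocks h,
      blockValues_eq hf ⟨_, h⟩ (by rwa [mem_negSet, neg_neg]), oddExt_neg, neg_neg]

lemma isSignedEmbedding_blockValues (hf : kerPartition f = P) (hfm : f ∈ boundedFuns n m) :
    IsSignedEmbedding m (blockValues P f) := by
  have hval (X : P.posBlocks) : X.1 = levelSet f (blockValues P f X) := by
    have hX := mem_blocks_of_mem_posBlocks X.2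
    exact eq_levelSet_of_kerPartition_eq hf hX (X.1.min'_mem (P.nonempty X.1 hX))
  refine ⟨fun X => mem_signedRange.2 ⟨fun h0 => ?_, abs_oddExt_le f (mem_boundedFuns.1 hfm) _⟩,
    fun X Y hXY => ?_⟩
  · refine negSet_ne_of_mem_posBlocks X.2 ?_
    rw [hval X, h0, negSet_levelSet, neg_zero]
  · rcases abs_eq_abs.1 hXY with h | h
    · exact Subtype.ext (by rw [hval X, hval Y, h])
    · refine absurd X.2 ?_
      rw [hval X, h, ← negSet_levelSet, ← hval Y]
      exact negSet_notMem_posBlocks Y.2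

variable (P) (e : P.posBlocks → ℤ)

noncomputable def funOfLabels : Fin n → ℤ := fun i => P.label e (P.blockOf (i + 1))

variable {P e}

lemma oddExt_funOfLabels (hx : x ∈ signedRange n) :
    oddExt (funOfLabels P e) x = P.label e (P.blockOf x) := by
  obtain ⟨i, rfl | rfl⟩ := exists_eq_of_mem_signedRange hx
  · exact oddExt_natCast_succ _ i
  · rw [oddExt_neg, oddExt_natCast_succ, P.blockOf_neg (natCast_succ_mem_signedRange i),
      label_negSet, funOfLabels]

lemma levelSet_funOfLabels (he : IsSignedEmbedding m e) (hx : x ∈ signedRange n) :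
    levelSet (funOfLabels P e) (P.label e (P.blockOf x)) = P.blockOf x := by
  ext y
  rw [mem_levelSet]
  constructor
  · rintro ⟨hy, hxy⟩
    rw [oddExt_funOfLabels hy] at hxy
    exact label_injOn he (P.blockOf_mem hy) (P.blockOf_mem hx) hxy ▸ P.mem_blockOf hy
  · intro hy
    have hy' := P.subset_signedRange (P.blockOf_mem hx) hy
    rw [oddExt_funOfLabels hy', P.blockOf_eq (P.blockOf_mem hx) hy]
    exact ⟨hy', rfl⟩

lemma kerPartition_funOfLabels (he : IsSignedEmbedding m e) :
    kerPartition (funOfLabels P e) = P := by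
  refine ext_blocks ?_
  change (signedRange n).image _ = _
  ext C
  simp only [mem_image]
  constructor
  · rintro ⟨x, hx, rfl⟩
    rw [oddExt_funOfLabels hx, levelSet_funOfLabels he hx]
    exact P.blockOf_mem hx
  · intro hC
    obtain ⟨x, hx⟩ := P.nonempty C hC
    have hx' := P.subset_signedRange hC hx
    refine ⟨x, hx', ?_⟩
    rw [oddExt_funOfLabels hx', levelSet_funOfLabels he hx', P.blockOf_eq hC hx]

lemma funOfLabels_mem_boundedFuns (he : IsSignedEmbedding m e) :
    funOfLabels P e ∈ boundedFuns n m :=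
  mem_boundedFuns.2 fun i => abs_label_le he (P.blockOf_mem (natCast_succ_mem_signedRange i))

variable (P m)

noncomputable def fiberEquiv :
    {f : Fin n → ℤ // f ∈ boundedFuns n m ∧ kerPartition f = P} ≃
      {e : P.posBlocks → ℤ // IsSignedEmbedding m e} where
  toFun f := ⟨blockValues P f.1, isSignedEmbedding_blockValues f.2.2 f.2.1⟩
  invFun e := ⟨funOfLabels P e.1, funOfLabels_mem_boundedFuns e.2, kerPartition_funOfLabels e.2⟩
  left_inv f := by
    refine Subtype.ext (funext fun i => ?_)
    have hi := natCast_succ_mem_signedRange i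
    rw [← oddExt_natCast_succ f.1 i]
    exact label_blockValues f.2.2 (P.blockOf_mem hi) (P.mem_blockOf hi)
  right_inv e := by
    refine Subtype.ext (funext fun X => ?_)
    change blockValues P (funOfLabels P e.1) X = e.1 X
    have hX := mem_blocks_of_mem_posBlocks X.2
    have hx := X.1.min'_mem (P.nonempty X.1 hX)
    rw [blockValues_eq (kerPartition_funOfLabels e.2) X hx,
      oddExt_funOfLabels (P.subset_signedRange hX hx), P.blockOf_eq hX hx,
      label_of_mem_posBlocks X.2]

theorem card_filter_kerPartition_eq :
    #((boundedFuns n m).filter (kerPartition · = P)) =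
      2 ^ #P.posBlocks * m.descFactorial #P.posBlocks := by
  rw [← Nat.card_eq_finsetCard, ← Fintype.card_coe P.posBlocks, ← card_isSignedEmbedding,
    ← Nat.card_congr (fiberEquiv m P)]
  exact Nat.card_congr (Equiv.subtypeEquivRight fun f => mem_filter)

end Fiber

section Counting

variable {n : ℕ}

lemma card_boundedFuns (n m : ℕ) : #(boundedFuns n m) = (2 * m + 1) ^ n := by
  have : (m + 1 + m : ℤ).toNat = 2 * m + 1 := by omega
  simp [boundedFuns, Fintype.card_piFinset, Int.card_Icc, this]

lemma mem_piFinset_update_iff {m : ℕ} {f : Fin n → ℤ} {i : Fin n} :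
    f ∈ Fintype.piFinset (Function.update (fun _ => signedRange m) i {0}) ↔
      f ∈ boundedFuns n m ∧ zeros f = {i} := by
  simp only [Fintype.mem_piFinset, mem_boundedFuns, Finset.ext_iff, zeros, mem_filter, mem_univ,
    true_and, mem_singleton, ← forall_and]
  refine forall_congr' fun j => ?_
  rcases eq_or_ne j i with rfl | hj
  · simp +contextual
  · simp [hj, mem_signedRange, and_comm]

lemma card_filter_card_zeros_eq_one (n m : ℕ) :
    #((boundedFuns n m).filter fun f => #(zeros f) = 1) = n * (2 * m) ^ (n - 1) := by
  have : (boundedFuns n m).filter (fun f => #(zeros f) = 1) =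
      univ.biUnion fun i => Fintype.piFinset (Function.update (fun _ => signedRange m) i {0}) := by
    ext f
    simp only [mem_filter, mem_biUnion, mem_univ, true_and, mem_piFinset_update_iff, card_eq_one,
      exists_and_left]
  rw [this, card_biUnion]
  · simp [Fintype.card_piFinset, Function.apply_update (fun _ s => #s), prod_update_of_mem,
      card_signedRange, card_univ_sdiff]
  · intro i _ j _ hij
    refine disjoint_left.2 fun f hi hj => hij ?_
    rw [mem_piFinset_update_iff] at hi hj
    exact singleton_injective (hi.2.symm.trans hj.2)

lemma SD_eq_card (n r : ℕ) :
    SD n r = #(univ.filter fun P : BPartition n => IsDPartition P ∧ #P.posBlocks = r) := by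
  rw [SD, Nat.card_eq_fintype_card, Fintype.card_subtype]
  simp only [BPartition.hasPairs_iff]

lemma card_filter_card_zeros_ne_one (n m : ℕ) :
    #((boundedFuns n m).filter fun f => #(zeros f) ≠ 1) =
      ∑ k ∈ range (n + 1), SD n k * (2 ^ k * m.descFactorial k) := by
  have hmaps : ∀ f ∈ (boundedFuns n m).filter (fun f => #(zeros f) ≠ 1),
      kerPartition f ∈ univ.filter IsDPartition := fun f hf =>
    mem_filter.2 ⟨mem_univ _, (isDPartition_kerPartition_iff f).2 (mem_filter.1 hf).2⟩
  rw [card_eq_sum_card_fiberwise hmaps]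
  have hfiber : ∀ P ∈ univ.filter IsDPartition,
      #(((boundedFuns n m).filter fun f => #(zeros f) ≠ 1).filter (kerPartition · = P)) =
        2 ^ #P.posBlocks * m.descFactorial #P.posBlocks := by
    intro P hP
    rw [← card_filter_kerPartition_eq, filter_filter]
    refine congrArg card (filter_congr fun f _ => and_iff_right_of_imp fun hfP => ?_)
    rw [← isDPartition_kerPartition_iff, hfP]
    exact (mem_filter.1 hP).2
  rw [sum_congr rfl hfiber, ← sum_fiberwise_of_maps_to (g := fun P => #P.posBlocks)
    (t := range (n + 1)) fun P _ => mem_range.2 (Nat.lt_succ_of_le P.card_posBlocks_le)]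
  refine sum_congr rfl fun k _ => ?_
  rw [sum_congr rfl fun P hP => by rw [(mem_filter.1 hP).2], sum_const, smul_eq_mul,
    SD_eq_card, filter_filter]

theorem card_boundedFuns_eq_sum (n m : ℕ) :
    (2 * m + 1) ^ n = ∑ k ∈ range (n + 1), SD n k * (2 ^ k * m.descFactorial k)
      + n * (2 * m) ^ (n - 1) := by
  rw [← card_boundedFuns, ← card_filter_card_zeros_ne_one, ← card_filter_card_zeros_eq_one,
    add_comm, card_filter_add_card_filter_not]

end Counting

open Polynomial

noncomputable def oddDescPochhammer (R : Type*) [CommRing R] (k : ℕ) : R[X] :=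
  ∏ j ∈ Icc 1 k, (X - C (2 * (j : R) - 1))

section OddDescPochhammer

variable {R : Type*} [CommRing R]

lemma oddDescPochhammer_succ (k : ℕ) :
    oddDescPochhammer R (k + 1) = oddDescPochhammer R k * (X - C (2 * ((k + 1 : ℕ) : R) - 1)) :=
  prod_Icc_succ_top (by omega) _

lemma eval_oddDescPochhammer (x : R) (k : ℕ) :
    (oddDescPochhammer R k).eval x = ∏ j ∈ Icc 1 k, (x - (2 * (j : R) - 1)) := by
  simp [oddDescPochhammer, eval_prod]

lemma eval_odd_oddDescPochhammer (m k : ℕ) :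
    (oddDescPochhammer R k).eval (2 * (m : R) + 1) = 2 ^ k * m.descFactorial k := by
  induction k with
  | zero => simp [oddDescPochhammer]
  | succ k ih =>
    rw [oddDescPochhammer_succ, eval_mul, ih, Nat.descFactorial_succ]
    rcases le_or_gt k m with h | h
    · simp only [eval_sub, eval_X, eval_C]
      push_cast [Nat.cast_sub h]
      ring
    · simp [Nat.descFactorial_eq_zero_iff_lt.2 h]

lemma oddDescPochhammer_monic (k : ℕ) : (oddDescPochhammer R k).Monic :=
  monic_prod_of_monic _ _ fun _ _ => monic_X_sub_C _

lemma natDegree_oddDescPochhammer [Nontrivial R] (k : ℕ) :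
    (oddDescPochhammer R k).natDegree = k := by
  rw [oddDescPochhammer, natDegree_prod_of_monic _ _ fun _ _ => monic_X_sub_C _]
  simp only [natDegree_X_sub_C, sum_const, Nat.card_Icc, smul_eq_mul, mul_one]
  omega

lemma coeff_oddDescPochhammer_self [Nontrivial R] (k : ℕ) :
    (oddDescPochhammer R k).coeff k = 1 := by
  simpa [natDegree_oddDescPochhammer] using (oddDescPochhammer_monic (R := R) k).coeff_natDegree

theorem X_pow_eq_sum_SD_mul_oddDescPochhammer [IsDomain R] [CharZero R] (n : ℕ) :
    (X ^ n : R[X]) = ∑ k ∈ range (n + 1), C (SD n k : R) * oddDescPochhammer R k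
      + C (n : R) * (X - 1) ^ (n - 1) := by
  apply eq_of_infinite_eval_eq
  refine (Set.infinite_range_of_injective (f := fun m : ℕ => 2 * (m : R) + 1)
    fun a b h => by simpa using h).mono ?_
  rintro _ ⟨m, rfl⟩
  simp only [Set.mem_ofPred_eq, eval_pow, eval_X, eval_add, eval_finsetSum, eval_mul, eval_C,
    eval_sub, eval_one, eval_odd_oddDescPochhammer, add_sub_cancel_right]
  exact_mod_cast card_boundedFuns_eq_sum n m

end OddDescPochhammer

theorem SD_self (n : ℕ) : SD n n = 1 := by
  have h := congrArg (coeff · n) (X_pow_eq_sum_SD_mul_oddDescPochhammer (R := ℤ) n)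
  have hlow : ∀ k ∈ range n, (C (SD n k : ℤ) * oddDescPochhammer ℤ k).coeff n = 0 :=
    fun k hk => by
      rw [coeff_C_mul, coeff_eq_zero_of_natDegree_lt, mul_zero]
      rwa [natDegree_oddDescPochhammer, ← mem_range]
  have hrem : (C (n : ℤ) * (X - 1) ^ (n - 1)).coeff n = 0 := by
    rcases n with _ | n
    · simp
    · rw [coeff_C_mul, coeff_eq_zero_of_natDegree_lt, mul_zero]
      rw [← C_1, natDegree_pow, natDegree_X_sub_C]
      omega
  rw [coeff_X_pow_self, coeff_add, finsetSum_coeff, sum_range_succ, sum_eq_zero hlow, hrem,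
    coeff_C_mul, coeff_oddDescPochhammer_self] at h
  exact_mod_cast (by simpa using h.symm : (SD n n : ℤ) = 1)

/-- `x^n = Σ_{k=0}^{n} S_D(n,k) · [x]_k^D + n·((x−1)^{n−1} − (x−1)(x−3)⋯(x−(2n−3)))`. -/
theorem falling_factorial_typeD (n : ℕ) (hn : 1 ≤ n) (x : ℝ) :
    x ^ n = (∑ k ∈ Finset.range (n + 1), (SD n k : ℝ) *
        (if k = n then (x - ((n : ℝ) - 1)) * ∏ j ∈ Finset.Icc 1 (n - 1), (x - (2 * (j : ℝ) - 1))
         else ∏ j ∈ Finset.Icc 1 k, (x - (2 * (j : ℝ) - 1)))) +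
      (n : ℝ) * ((x - 1) ^ (n - 1) - ∏ j ∈ Finset.Icc 1 (n - 1), (x - (2 * (j : ℝ) - 1))) := by
  have h := congrArg (eval x) (X_pow_eq_sum_SD_mul_oddDescPochhammer (R := ℝ) n)
  obtain ⟨n, rfl⟩ : ∃ k, n = k + 1 := ⟨n - 1, by omega⟩
  rw [sum_range_succ, if_pos rfl, sum_congr rfl fun k hk => by rw [if_neg (mem_range.1 hk).ne]]
  rw [sum_range_succ] at h
  simp only [eval_pow, eval_X, eval_add, eval_finsetSum, eval_mul, eval_C, eval_sub, eval_one,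
    eval_oddDescPochhammer, SD_self, prod_Icc_succ_top (by omega : 1 ≤ n + 1)] at h
  simp only [SD_self, add_tsub_cancel_right]
  push_cast at h ⊢
  linear_combination h
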